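/- arXiv:1806.08418 — 6 statements merged into one kernel-verified Lean document; each statement's English description precedes it below -/
import Mathlib

section
/- For every integer k ≥ 1, a_{l(k+1)} ≤ a_{l(k)} + (η_{kM} + η_{kM+1} + ⋯ + η_{kM+M−1}) − Δ_{l(k+1)−1}², where the sum ranges over the M consecutive indices kM, kM+1, …, kM+M−1. -/
lemma aux_block (M : ℕ) (hM : 1 ≤ M)
    (a Δ η : ℕ → ℝ)
    (hΔ : ∀ k, 0 < Δ k) (hη : ∀ k, 0 < η k)
    (hdec : ∀ k : ℕ,
      a (k + 1) ≤ (Finset.range (min k (M - 1) + 1)).sup'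
          (Finset.nonempty_range_iff.mpr (Nat.succ_ne_zero _)) (fun j => a (k - j))
        + η k - (Δ k) ^ 2)
    (k : ℕ) (hk : 1 ≤ k) (A : ℝ) (hA : ∀ j < M, a (k * M - j) ≤ A) :
    ∀ t, 1 ≤ t → t ≤ M →
      a (k * M + t) ≤ A + (∑ i ∈ Finset.range t, η (k * M + i)) - (Δ (k * M + t - 1)) ^ 2 := by
  intro t
  induction t using Nat.strong_induction_on with
  | _ t ih =>
    intro ht1 htM
    have hkM : M ≤ k * M := Nat.le_mul_of_pos_left M hk
    have hmin : min (k * M + (t - 1)) (M - 1) = M - 1 := by omega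
    have h := hdec (k * M + (t - 1))
    have heq1 : k * M + (t - 1) + 1 = k * M + t := by omega
    have heq2 : k * M + t - 1 = k * M + (t - 1) := by omega
    rw [heq1, hmin] at h
    rw [heq2]
    have hsup : (Finset.range (M - 1 + 1)).sup'
        (Finset.nonempty_range_iff.mpr (Nat.succ_ne_zero _))
        (fun j => a (k * M + (t - 1) - j))
        ≤ A + ∑ i ∈ Finset.range (t - 1), η (k * M + i) := by
      apply Finset.sup'_le
      intro j hj
      simp only [Finset.mem_range] at hj
      have hjM : j < M := by omega
      by_cases hcase : j ≤ t - 1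
      · set s := t - 1 - j with hs
        have hidx : k * M + (t - 1) - j = k * M + s := by omega
        rw [hidx]
        rcases Nat.eq_zero_or_pos s with h0 | hpos
        · rw [h0]
          have := hA 0 (by omega)
          simp only [Nat.sub_zero] at this
          simp only [Nat.add_zero]
          have hsum : (0:ℝ) ≤ ∑ i ∈ Finset.range (t - 1), η (k * M + i) :=
            Finset.sum_nonneg fun i _ => (hη _).le
          linarith
        · have hslt : s < t := by omega
          have := ih s hslt hpos (by omega)
          have hsum : ∑ i ∈ Finset.range s, η (k * M + i)
              ≤ ∑ i ∈ Finset.range (t - 1), η (k * M + i) := by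
            apply Finset.sum_le_sum_of_subset_of_nonneg
            · exact Finset.range_subset_range.mpr (by omega)
            · exact fun i _ _ => (hη _).le
          have hΔ2 : (0:ℝ) ≤ (Δ (k * M + s - 1)) ^ 2 := sq_nonneg _
          linarith
      · have hidx : k * M + (t - 1) - j = k * M - (j - (t - 1)) := by omega
        rw [hidx]
        have := hA (j - (t - 1)) (by omega)
        have hsum : (0:ℝ) ≤ ∑ i ∈ Finset.range (t - 1), η (k * M + i) :=
          Finset.sum_nonneg fun i _ => (hη _).le
        linarith
    have hsplit : ∑ i ∈ Finset.range t, η (k * M + i)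
        = (∑ i ∈ Finset.range (t - 1), η (k * M + i)) + η (k * M + (t - 1)) := by
      conv_lhs => rw [show t = (t - 1) + 1 by omega, Finset.sum_range_succ]
    rw [hsplit]
    linarith

/-- Proposition 1 (key inequality across blocks): for every k ≥ 1,
  a_{l(k+1)} ≤ a_{l(k)} + (η_{kM} + ⋯ + η_{kM+M−1}) − Δ_{l(k+1)−1}². -/
theorem stmt_0 (M : ℕ) (hM : 1 ≤ M)
    (a Δ η : ℕ → ℝ)
    (hΔ : ∀ k, 0 < Δ k) (hη : ∀ k, 0 < η k)
    (hdec : ∀ k : ℕ,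
      a (k + 1) ≤ (Finset.range (min k (M - 1) + 1)).sup'
          (Finset.nonempty_range_iff.mpr (Nat.succ_ne_zero _)) (fun j => a (k - j))
        + η k - (Δ k) ^ 2)
    (l : ℕ → ℕ)
    (hl_lb : ∀ k, 1 ≤ k → k * M - (M - 1) ≤ l k)
    (hl_ub : ∀ k, 1 ≤ k → l k ≤ k * M)
    (hl_max : ∀ k, 1 ≤ k →
      a (l k) = (Finset.range M).sup'
          (Finset.nonempty_range_iff.mpr (by omega)) (fun j => a (k * M - j))) :
    ∀ k : ℕ, 1 ≤ k →
      a (l (k + 1)) ≤ a (l k) + (∑ j ∈ Finset.range M, η (k * M + j))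
        - (Δ (l (k + 1) - 1)) ^ 2 := by
  intro k hk
  have hkM : M ≤ k * M := Nat.le_mul_of_pos_left M hk
  have hlb := hl_lb (k + 1) (by omega)
  have hub := hl_ub (k + 1) (by omega)
  have hlb' : k * M + 1 ≤ l (k + 1) := by
    have : (k + 1) * M = k * M + M := by ring
    omega
  have hub' : l (k + 1) ≤ k * M + M := by
    have : (k + 1) * M = k * M + M := by ring
    omega
  set t := l (k + 1) - k * M with ht
  have ht1 : 1 ≤ t := by omega
  have htM : t ≤ M := by omega
  have hleq : l (k + 1) = k * M + t := by omega
  have hA : ∀ j < M, a (k * M - j) ≤ a (l k) := by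
    intro j hj
    rw [hl_max k hk]
    exact Finset.le_sup' (fun j => a (k * M - j)) (Finset.mem_range.mpr hj)
  have := aux_block M hM a Δ η hΔ hη hdec k hk (a (l k)) hA t ht1 htM
  rw [hleq]
  have hsum : ∑ i ∈ Finset.range t, η (k * M + i)
      ≤ ∑ j ∈ Finset.range M, η (k * M + j) := by
    apply Finset.sum_le_sum_of_subset_of_nonneg
    · exact Finset.range_subset_range.mpr htM
    · exact fun i _ _ => (hη _).le
  linarith
end

section
/- For every v ∈ ℝⁿ, if [v]_{K°} ≠ 0 then there exists d ∈ G such that (1/√n)·‖[v]_{K°}‖ ≤ ⟪v, d⟫. -/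
/-!
Let `p` be the projection of `v` onto `K°`. Since `K°` is convex and zeroing a coordinate of
`p` keeps it in `K°`, the variational inequality `⟪v - p, q - p⟫ ≤ 0` applied to that point gives
`p i ^ 2 ≤ p i * v i` for every `i`: along a nonzero coordinate of `p`, `v` points at least as far
as `p` does. Choosing `i` with `|p i| ≥ ‖p‖ / √n`, the generator `d = sign (p i) • e_i` lies in `G`
(a nonzero `p i` is compatible with the sign constraint on coordinate `i`), and
`⟪v, d⟫ = sign (p i) * v i ≥ |p i| ≥ ‖p‖ / √n`.
-/

open scoped RealInnerProductSpace

theorem real_inner_sub_nonpos_of_forall_norm_sub_le {F : Type*} [NormedAddCommGroup F]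
    [InnerProductSpace ℝ F] {K : Set F} (hK : Convex ℝ K) {v p : F} (hp : p ∈ K)
    (hmin : ∀ q ∈ K, ‖v - p‖ ≤ ‖v - q‖) : ∀ q ∈ K, ⟪v - p, q - p⟫ ≤ 0 := by
  have : Nonempty K := ⟨⟨p, hp⟩⟩
  refine (norm_eq_iInf_iff_real_inner_le_zero hK hp).mp (le_antisymm ?_ ?_)
  · exact le_ciInf fun q => hmin q q.2
  · exact ciInf_le (f := fun q : K => ‖v - q‖)
      ⟨0, Set.forall_mem_range.2 fun _ => norm_nonneg _⟩ ⟨p, hp⟩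

namespace EuclideanSpace

variable {ι : Type*}

theorem exists_norm_le_sqrt_card_mul_abs [Fintype ι] {x : EuclideanSpace ℝ ι} (hx : x ≠ 0) :
    ∃ i, ‖x‖ ≤ √(Fintype.card ι) * |x i| := by
  have : Nonempty ι := by
    by_contra h
    rw [not_nonempty_iff] at h
    exact hx (Subsingleton.elim _ _)
  obtain ⟨i, hi⟩ := Finite.exists_max fun j => |x j|
  refine ⟨i, ?_⟩
  calc ‖x‖ = √(∑ j, |x j| ^ 2) := by simp only [norm_eq, Real.norm_eq_abs]
    _ ≤ √(∑ _j : ι, |x i| ^ 2) :=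
      Real.sqrt_le_sqrt <| Finset.sum_le_sum fun j _ => pow_le_pow_left₀ (abs_nonneg _) (hi j) 2
    _ = √(Fintype.card ι) * |x i| := by
      rw [Finset.sum_const, Finset.card_univ, nsmul_eq_mul, Real.sqrt_mul (Nat.cast_nonneg _),
        Real.sqrt_sq (abs_nonneg _)]

theorem sub_apply_smul_single_apply [DecidableEq ι] (p : EuclideanSpace ℝ ι) (i j : ι) :
    (p - p i • single i (1 : ℝ)) j = if j = i then 0 else p j := by
  by_cases h : j = i <;> simp [h]

theorem sq_apply_le_apply_mul_apply_of_forall_norm_sub_le [Fintype ι] [DecidableEq ι]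
    {K : Set (EuclideanSpace ℝ ι)} (hK : Convex ℝ K) {v p : EuclideanSpace ℝ ι} (hp : p ∈ K)
    (hmin : ∀ q ∈ K, ‖v - p‖ ≤ ‖v - q‖) {i : ι} (hi : p - p i • single i (1 : ℝ) ∈ K) :
    p i ^ 2 ≤ p i * v i := by
  have h := real_inner_sub_nonpos_of_forall_norm_sub_le hK hp hmin _ hi
  rw [sub_sub_cancel_left, inner_neg_right, inner_smul_right, inner_single_right] at h
  simp only [PiLp.sub_apply, conj_trivial, one_mul] at h
  nlinarith

end EuclideanSpace

section SignConstraints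

variable {ι : Type*} (Ip Im : Set ι)

def signConstrainedCone : Set (EuclideanSpace ℝ ι) :=
  {w | (∀ i ∈ Ip, w i ≤ 0) ∧ (∀ i ∈ Im, 0 ≤ w i)}

theorem convex_signConstrainedCone : Convex ℝ (signConstrainedCone Ip Im) := by
  rintro x ⟨hxp, hxm⟩ y ⟨hyp, hym⟩ a b ha hb -
  refine ⟨fun i hi => ?_, fun i hi => ?_⟩ <;>
    simp only [PiLp.add_apply, PiLp.smul_apply, smul_eq_mul]
  · nlinarith [hxp i hi, hyp i hi]
  · nlinarith [hxm i hi, hym i hi]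

theorem sub_apply_smul_single_mem_signConstrainedCone [DecidableEq ι]
    {p : EuclideanSpace ℝ ι} (hp : p ∈ signConstrainedCone Ip Im) (i : ι) :
    p - p i • EuclideanSpace.single i (1 : ℝ) ∈ signConstrainedCone Ip Im := by
  refine ⟨fun j hj => ?_, fun j hj => ?_⟩ <;>
    rw [EuclideanSpace.sub_apply_smul_single_apply] <;> split_ifs
  exacts [le_rfl, hp.1 j hj, le_rfl, hp.2 j hj]

def signConstrainedGenerators [DecidableEq ι] : Set (EuclideanSpace ℝ ι) :=
  {d | (∃ i ∈ Ip, d = -(EuclideanSpace.single i (1 : ℝ)))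
    ∨ (∃ i ∈ Im, d = EuclideanSpace.single i (1 : ℝ))
    ∨ (∃ i, i ∉ Ip ∧ i ∉ Im ∧
        (d = EuclideanSpace.single i (1 : ℝ) ∨ d = -(EuclideanSpace.single i (1 : ℝ))))}

variable {Ip Im} [DecidableEq ι] {p : EuclideanSpace ℝ ι} {i : ι}

theorem neg_single_mem_signConstrainedGenerators (hp : p ∈ signConstrainedCone Ip Im)
    (hi : p i < 0) : -EuclideanSpace.single i (1 : ℝ) ∈ signConstrainedGenerators Ip Im := by
  by_cases hIp : i ∈ Ip
  · exact Or.inl ⟨i, hIp, rfl⟩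
  · have hIm : i ∉ Im := fun h => (hp.2 i h).not_gt hi
    exact Or.inr (Or.inr ⟨i, hIp, hIm, Or.inr rfl⟩)

theorem single_mem_signConstrainedGenerators (hp : p ∈ signConstrainedCone Ip Im)
    (hi : 0 < p i) : EuclideanSpace.single i (1 : ℝ) ∈ signConstrainedGenerators Ip Im := by
  by_cases hIm : i ∈ Im
  · exact Or.inr (Or.inl ⟨i, hIm, rfl⟩)
  · have hIp : i ∉ Ip := fun h => (hp.1 i h).not_gt hi
    exact Or.inr (Or.inr ⟨i, hIp, hIm, Or.inl rfl⟩)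

end SignConstraints

theorem stmt_3_general (n : ℕ)
    (Ip Im : Set (Fin n))
    (Kpolar : Set (EuclideanSpace ℝ (Fin n)))
    (hKpolar : Kpolar = {w | (∀ i ∈ Ip, w i ≤ 0) ∧ (∀ i ∈ Im, 0 ≤ w i)})
    (G : Set (EuclideanSpace ℝ (Fin n)))
    (hG : G = {d | (∃ i ∈ Ip, d = -(EuclideanSpace.single i (1 : ℝ)))
        ∨ (∃ i ∈ Im, d = EuclideanSpace.single i (1 : ℝ))
        ∨ (∃ i, i ∉ Ip ∧ i ∉ Im ∧
            (d = EuclideanSpace.single i (1 : ℝ) ∨ d = -(EuclideanSpace.single i (1 : ℝ))))})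
    (v p : EuclideanSpace ℝ (Fin n))
    (hpmem : p ∈ Kpolar)
    (hpproj : ∀ q ∈ Kpolar, ‖v - p‖ ≤ ‖v - q‖)
    (hpne : p ≠ 0) :
    ∃ d ∈ G, (1 / Real.sqrt n) * ‖p‖ ≤ (inner ℝ v d : ℝ) := by
  change Kpolar = signConstrainedCone Ip Im at hKpolar
  change G = signConstrainedGenerators Ip Im at hG
  subst hKpolar hG
  obtain ⟨i, hi⟩ := EuclideanSpace.exists_norm_le_sqrt_card_mul_abs hpne
  rw [Fintype.card_fin] at hi
  have hbound : 1 / √n * ‖p‖ ≤ |p i| := by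
    rw [one_div_mul_eq_div]
    exact div_le_of_le_mul₀ (Real.sqrt_nonneg _) (abs_nonneg _) (by linarith)
  have hpv := EuclideanSpace.sq_apply_le_apply_mul_apply_of_forall_norm_sub_le
    (convex_signConstrainedCone Ip Im) hpmem hpproj
    (sub_apply_smul_single_mem_signConstrainedCone Ip Im hpmem i)
  rcases lt_trichotomy (p i) 0 with hneg | hzero | hpos
  · refine ⟨_, neg_single_mem_signConstrainedGenerators hpmem hneg, ?_⟩
    rw [abs_of_neg hneg] at hbound
    simp only [inner_neg_right, EuclideanSpace.inner_single_right, conj_trivial, one_mul]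
    nlinarith
  · have : ‖p‖ ≤ 0 := by simpa [hzero] using hi
    exact absurd (norm_le_zero_iff.mp this) hpne
  · refine ⟨_, single_mem_signConstrainedGenerators hpmem hpos, ?_⟩
    rw [abs_of_pos hpos] at hbound
    simp only [EuclideanSpace.inner_single_right, conj_trivial, one_mul]
    nlinarith

/-- Proposition 3 (Kolda–Lewis–Torczon): if the projection of v onto K° is nonzero,
  some generator d of K° satisfies (1/√n)‖[v]_{K°}‖ ≤ ⟪v, d⟫. -/
theorem stmt_3 (n : ℕ) (hn : 1 ≤ n)
    (Ip Im : Set (Fin n)) (hdisj : Disjoint Ip Im)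
    (Kpolar : Set (EuclideanSpace ℝ (Fin n)))
    (hKpolar : Kpolar = {w | (∀ i ∈ Ip, w i ≤ 0) ∧ (∀ i ∈ Im, 0 ≤ w i)})
    (G : Set (EuclideanSpace ℝ (Fin n)))
    (hG : G = {d | (∃ i ∈ Ip, d = -(EuclideanSpace.single i (1 : ℝ)))
        ∨ (∃ i ∈ Im, d = EuclideanSpace.single i (1 : ℝ))
        ∨ (∃ i, i ∉ Ip ∧ i ∉ Im ∧
            (d = EuclideanSpace.single i (1 : ℝ) ∨ d = -(EuclideanSpace.single i (1 : ℝ))))})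
    (v p : EuclideanSpace ℝ (Fin n))
    (hpmem : p ∈ Kpolar)
    (hpproj : ∀ q ∈ Kpolar, ‖v - p‖ ≤ ‖v - q‖)
    (hpne : p ≠ 0) :
    ∃ d ∈ G, (1 / Real.sqrt n) * ‖p‖ ≤ (inner ℝ v d : ℝ) :=
  stmt_3_general n Ip Im Kpolar hKpolar G hG v p hpmem hpproj hpne
end

section
/- Let ε ≥ 0 and set I⁺ = {i : u_i − x_i ≤ ε} and I⁻ = {i : x_i − l_i ≤ ε}; assume I⁺ and I⁻ are disjoint. Let K = {w ∈ ℝⁿ : w_i ≥ 0 for i ∈ I⁺, w_i ≤ 0 for i ∈ I⁻, w_i = 0 otherwise} and K° = {w ∈ ℝⁿ : w_i ≤ 0 for i ∈ I⁺, w_i ≥ 0 for i ∈ I⁻}. Then χ(x) ≤ ‖[−∇f(x)]_{K°}‖ + √n · ‖[−∇f(x)]_K‖ · ε, where [·]_K and [·]_{K°} denote the metric projections onto K and K°. -/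
/-!
With `g = -∇f(x)`, the cones `K` and `K°` are products of coordinate rays, points and lines, so
their metric projections are coordinatewise clamps (`max gᵢ 0`, `min gᵢ 0`, `0` or `gᵢ`) and
`g = [g]_K + [g]_{K°}`. For a feasible step `ω` with `‖ω‖ ≤ 1`, Cauchy–Schwarz bounds
`⟪[g]_{K°}, ω⟫` by `‖[g]_{K°}‖`. The vector `[g]_K` lives on the `ε`-active coordinates, with the
sign pointing towards the nearby bound, and a feasible step moves at most `ε` in that direction;
hence `⟪[g]_K, ω⟫ ≤ ε ∑ |[g]_K i| ≤ √n ‖[g]_K‖ ε`.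
-/

open Set
open scoped InnerProductSpace

section NearestPoint

variable {E : Type*} [NormedAddCommGroup E]

def IsNearestPoint (s : Set E) (g a : E) : Prop :=
  a ∈ s ∧ ∀ q ∈ s, ‖g - a‖ ≤ ‖g - q‖

variable [InnerProductSpace ℝ E] {s : Set E} {g a b : E}

theorem IsNearestPoint.real_inner_sub_sub_nonpos (hs : Convex ℝ s) (ha : IsNearestPoint s g a)
    {w : E} (hw : w ∈ s) : ⟪g - a, w - a⟫_ℝ ≤ 0 := by
  have : Nonempty s := ⟨⟨a, ha.1⟩⟩
  have hinf : ‖g - a‖ = ⨅ q : s, ‖g - q‖ :=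
    le_antisymm (le_ciInf fun q => ha.2 q q.2)
      (ciInf_le ⟨0, by rintro _ ⟨q, rfl⟩; positivity⟩ (⟨a, ha.1⟩ : s))
  exact (norm_eq_iInf_iff_real_inner_le_zero hs ha.1).1 hinf w hw

theorem IsNearestPoint.unique (hs : Convex ℝ s) (ha : IsNearestPoint s g a)
    (hb : IsNearestPoint s g b) : a = b := by
  have h := add_nonpos (ha.real_inner_sub_sub_nonpos hs hb.1) (hb.real_inner_sub_sub_nonpos hs ha.1)
  rw [← neg_sub b a, inner_neg_right, ← sub_eq_add_neg, ← inner_sub_left,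
    sub_sub_sub_cancel_left, real_inner_self_nonpos, sub_eq_zero] at h
  exact h.symm

end NearestPoint

theorem isNearestPoint_max_zero (t : ℝ) : IsNearestPoint (Ici 0) t (max t 0) := by
  refine ⟨le_max_right t 0, fun s (hs : 0 ≤ s) => ?_⟩
  rcases le_total 0 t with h | h
  · simp [max_eq_left h]
  · rw [max_eq_right h, Real.norm_eq_abs, Real.norm_eq_abs, abs_of_nonpos (by linarith),
      abs_of_nonpos (by linarith)]
    linarith

theorem isNearestPoint_min_zero (t : ℝ) : IsNearestPoint (Iic 0) t (min t 0) := by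
  refine ⟨min_le_right t 0, fun s (hs : s ≤ 0) => ?_⟩
  rcases le_total t 0 with h | h
  · simp [min_eq_left h]
  · rw [min_eq_right h, Real.norm_eq_abs, Real.norm_eq_abs, abs_of_nonneg (by linarith),
      abs_of_nonneg (by linarith)]
    linarith

theorem isNearestPoint_singleton (t a : ℝ) : IsNearestPoint {a} t a :=
  ⟨rfl, fun _ hq => by rw [hq]⟩

theorem isNearestPoint_univ (t : ℝ) : IsNearestPoint univ t t :=
  ⟨trivial, fun _ _ => by simp⟩

variable {ι : Type*}

section CoordinateBox

variable {S T : ι → Set ℝ}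

theorem EuclideanSpace.convex_setOf_forall_apply_mem (hS : ∀ i, Convex ℝ (S i)) :
    Convex ℝ {w : EuclideanSpace ℝ ι | ∀ i, w i ∈ S i} :=
  fun _ ha _ hb _ _ hs ht hst i => hS i (ha i) (hb i) hs ht hst

theorem EuclideanSpace.norm_sub_le_norm_sub_of_forall [Fintype ι] {g a w : EuclideanSpace ℝ ι}
    (h : ∀ i, ‖g i - a i‖ ≤ ‖g i - w i‖) : ‖g - a‖ ≤ ‖g - w‖ := by
  rw [EuclideanSpace.norm_eq, EuclideanSpace.norm_eq]
  gcongr with i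
  exact h i

theorem EuclideanSpace.isNearestPoint_toLp [Fintype ι] {g : EuclideanSpace ℝ ι} {a : ι → ℝ}
    (ha : ∀ i, IsNearestPoint (S i) (g i) (a i)) :
    IsNearestPoint {w : EuclideanSpace ℝ ι | ∀ i, w i ∈ S i} g (WithLp.toLp 2 a) :=
  ⟨fun i => (ha i).1, fun _ hq => norm_sub_le_norm_sub_of_forall fun i => (ha i).2 _ (hq i)⟩

theorem EuclideanSpace.add_eq_of_isNearestPoint [Fintype ι] (hS : ∀ i, Convex ℝ (S i))
    (hT : ∀ i, Convex ℝ (T i)) {g p p' : EuclideanSpace ℝ ι}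
    (hdec : ∀ i, ∃ a b, a + b = g i ∧ IsNearestPoint (S i) (g i) a ∧ IsNearestPoint (T i) (g i) b)
    (hp : IsNearestPoint {w : EuclideanSpace ℝ ι | ∀ i, w i ∈ S i} g p)
    (hp' : IsNearestPoint {w : EuclideanSpace ℝ ι | ∀ i, w i ∈ T i} g p') :
    p + p' = g := by
  choose a b hab ha hb using hdec
  rw [hp.unique (convex_setOf_forall_apply_mem hS) (isNearestPoint_toLp ha),
    hp'.unique (convex_setOf_forall_apply_mem hT) (isNearestPoint_toLp hb)]
  ext i
  exact hab i

end CoordinateBox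

section SignCone

variable (P M : Set ι)

def signCone : Set (EuclideanSpace ℝ ι) :=
  {w | (∀ i ∈ P, 0 ≤ w i) ∧ (∀ i ∈ M, w i ≤ 0) ∧ ∀ i, i ∉ P → i ∉ M → w i = 0}

def signPolarCone : Set (EuclideanSpace ℝ ι) :=
  {w | (∀ i ∈ P, w i ≤ 0) ∧ (∀ i ∈ M, 0 ≤ w i)}

open scoped Classical in
def signConeFactor (i : ι) : Set ℝ :=
  if i ∈ P then Ici 0 else if i ∈ M then Iic 0 else {0}

open scoped Classical in
def signPolarConeFactor (i : ι) : Set ℝ :=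
  if i ∈ P then Iic 0 else if i ∈ M then Ici 0 else univ

variable {P M}

theorem signCone_eq (hPM : Disjoint P M) :
    signCone P M = {w | ∀ i, w i ∈ signConeFactor P M i} := by
  ext w
  constructor
  · rintro ⟨hP, hM, h0⟩ i
    unfold signConeFactor
    split_ifs with hiP hiM
    exacts [hP i hiP, hM i hiM, h0 i hiP hiM]
  · intro h
    refine ⟨fun i hiP => ?_, fun i hiM => ?_, fun i hiP hiM => ?_⟩
    · simpa [signConeFactor, hiP] using h i
    · simpa [signConeFactor, hPM.notMem_of_mem_right hiM, hiM] using h i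
    · simpa [signConeFactor, hiP, hiM] using h i

theorem signPolarCone_eq (hPM : Disjoint P M) :
    signPolarCone P M = {w | ∀ i, w i ∈ signPolarConeFactor P M i} := by
  ext w
  constructor
  · rintro ⟨hP, hM⟩ i
    unfold signPolarConeFactor
    split_ifs with hiP hiM
    exacts [hP i hiP, hM i hiM, trivial]
  · intro h
    refine ⟨fun i hiP => ?_, fun i hiM => ?_⟩
    · simpa [signPolarConeFactor, hiP] using h i
    · simpa [signPolarConeFactor, hPM.notMem_of_mem_right hiM, hiM] using h i

theorem convex_signConeFactor (i : ι) : Convex ℝ (signConeFactor P M i) := by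
  unfold signConeFactor
  split_ifs
  exacts [convex_Ici 0, convex_Iic 0, convex_singleton 0]

theorem convex_signPolarConeFactor (i : ι) : Convex ℝ (signPolarConeFactor P M i) := by
  unfold signPolarConeFactor
  split_ifs
  exacts [convex_Iic 0, convex_Ici 0, convex_univ]

theorem exists_add_eq_isNearestPoint_signConeFactor (i : ι) (t : ℝ) :
    ∃ a b, a + b = t ∧ IsNearestPoint (signConeFactor P M i) t a ∧
      IsNearestPoint (signPolarConeFactor P M i) t b := by
  unfold signConeFactor signPolarConeFactor
  split_ifs
  · exact ⟨max t 0, min t 0, by rw [add_comm, min_add_max, add_zero],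
      isNearestPoint_max_zero t, isNearestPoint_min_zero t⟩
  · exact ⟨min t 0, max t 0, by rw [min_add_max, add_zero],
      isNearestPoint_min_zero t, isNearestPoint_max_zero t⟩
  · exact ⟨0, t, zero_add t, isNearestPoint_singleton t 0, isNearestPoint_univ t⟩

theorem add_eq_of_isNearestPoint_signCone [Fintype ι] (hPM : Disjoint P M)
    {g p p' : EuclideanSpace ℝ ι} (hp : IsNearestPoint (signCone P M) g p)
    (hp' : IsNearestPoint (signPolarCone P M) g p') : p + p' = g := by
  rw [signCone_eq hPM] at hp
  rw [signPolarCone_eq hPM] at hp'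
  exact EuclideanSpace.add_eq_of_isNearestPoint convex_signConeFactor
    convex_signPolarConeFactor (fun i => exists_add_eq_isNearestPoint_signConeFactor i (g i)) hp hp'

end SignCone

theorem EuclideanSpace.sum_abs_le_sqrt_card_mul_norm [Fintype ι] (p : EuclideanSpace ℝ ι) :
    ∑ i, |p i| ≤ √(Fintype.card ι) * ‖p‖ := by
  simpa [EuclideanSpace.norm_eq] using Real.sum_mul_le_sqrt_mul_sqrt Finset.univ 1 (|p ·|)

theorem mul_le_abs_mul_of_mem_signCone {l u : ι → ℝ} {x ω w : EuclideanSpace ℝ ι} {ε : ℝ}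
    (hω : x + ω ∈ {y : EuclideanSpace ℝ ι | ∀ i, l i ≤ y i ∧ y i ≤ u i})
    (hw : w ∈ signCone {i | u i - x i ≤ ε} {i | x i - l i ≤ ε}) (i : ι) :
    w i * ω i ≤ |w i| * ε := by
  obtain ⟨hlo, hup⟩ : l i ≤ x i + ω i ∧ x i + ω i ≤ u i := hω i
  obtain ⟨hP, hM, h0⟩ := hw
  by_cases hiP : u i - x i ≤ ε
  · rw [abs_of_nonneg (hP i hiP)]
    exact mul_le_mul_of_nonneg_left (by linarith) (hP i hiP)
  by_cases hiM : x i - l i ≤ ε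
  · rw [abs_of_nonpos (hM i hiM)]
    nlinarith [hM i hiM]
  · simp [h0 i hiP hiM]

theorem real_inner_le_of_mem_signCone [Fintype ι] {l u : ι → ℝ} {x ω w : EuclideanSpace ℝ ι}
    {ε : ℝ} (hε : 0 ≤ ε) (hω : x + ω ∈ {y : EuclideanSpace ℝ ι | ∀ i, l i ≤ y i ∧ y i ≤ u i})
    (hw : w ∈ signCone {i | u i - x i ≤ ε} {i | x i - l i ≤ ε}) :
    ⟪w, ω⟫_ℝ ≤ √(Fintype.card ι) * ‖w‖ * ε :=
  calc ⟪w, ω⟫_ℝ = ∑ i, w i * ω i := by simp [PiLp.inner_apply, mul_comm]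
    _ ≤ ∑ i, |w i| * ε := Finset.sum_le_sum fun i _ => mul_le_abs_mul_of_mem_signCone hω hw i
    _ = (∑ i, |w i|) * ε := (Finset.sum_mul ..).symm
    _ ≤ √(Fintype.card ι) * ‖w‖ * ε :=
      mul_le_mul_of_nonneg_right (EuclideanSpace.sum_abs_le_sqrt_card_mul_norm w) hε

theorem stmt_6_general (n : ℕ)
    (l u : Fin n → ℝ)
    (Ω : Set (EuclideanSpace ℝ (Fin n)))
    (hΩ : Ω = {y | ∀ i, l i ≤ y i ∧ y i ≤ u i})
    (f : EuclideanSpace ℝ (Fin n) → ℝ)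
    (x : EuclideanSpace ℝ (Fin n))
    (ε : ℝ) (hε : 0 ≤ ε)
    (Ip Im : Set (Fin n))
    (hIp : Ip = {i | u i - x i ≤ ε}) (hIm : Im = {i | x i - l i ≤ ε})
    (hdisj : Disjoint Ip Im)
    (K Kpolar : Set (EuclideanSpace ℝ (Fin n)))
    (hK : K = {w | (∀ i ∈ Ip, 0 ≤ w i) ∧ (∀ i ∈ Im, w i ≤ 0)
        ∧ (∀ i, i ∉ Ip → i ∉ Im → w i = 0)})
    (hKpolar : Kpolar = {w | (∀ i ∈ Ip, w i ≤ 0) ∧ (∀ i ∈ Im, 0 ≤ w i)})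
    (pK pKpolar : EuclideanSpace ℝ (Fin n))
    (hpKmem : pK ∈ K)
    (hpKproj : ∀ q ∈ K, ‖-gradient f x - pK‖ ≤ ‖-gradient f x - q‖)
    (hpKpmem : pKpolar ∈ Kpolar)
    (hpKpproj : ∀ q ∈ Kpolar, ‖-gradient f x - pKpolar‖ ≤ ‖-gradient f x - q‖)
    (χ : ℝ)
    (hχ : χ = sSup {r : ℝ | ∃ ω : EuclideanSpace ℝ (Fin n),
        x + ω ∈ Ω ∧ ‖ω‖ ≤ 1 ∧ r = -(inner ℝ (gradient f x) ω : ℝ)}) :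
    χ ≤ ‖pKpolar‖ + Real.sqrt n * ‖pK‖ * ε := by
  subst hΩ hIp hIm hK hKpolar hχ
  have hdecomp : pK + pKpolar = -gradient f x :=
    add_eq_of_isNearestPoint_signCone hdisj ⟨hpKmem, hpKproj⟩ ⟨hpKpmem, hpKpproj⟩
  refine Real.sSup_le ?_ (by positivity)
  rintro _ ⟨ω, hω, hω1, rfl⟩
  calc -⟪gradient f x, ω⟫_ℝ = ⟪pKpolar, ω⟫_ℝ + ⟪pK, ω⟫_ℝ := by
        rw [← inner_neg_left, ← hdecomp, inner_add_left, add_comm]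
    _ ≤ ‖pKpolar‖ * ‖ω‖ + √(Fintype.card (Fin n)) * ‖pK‖ * ε :=
        add_le_add (real_inner_le_norm _ _) (real_inner_le_of_mem_signCone hε hω hpKmem)
    _ ≤ ‖pKpolar‖ + √n * ‖pK‖ * ε := by
        rw [Fintype.card_fin]
        gcongr
        exact mul_le_of_le_one_right (norm_nonneg _) hω1

/-- Proposition 4 (Kolda–Lewis–Torczon): bound for the stationarity measure,
  χ(x) ≤ ‖[−∇f(x)]_{K°}‖ + √n · ‖[−∇f(x)]_K‖ · ε. -/
theorem stmt_6 (n : ℕ) (hn : 1 ≤ n)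
    (l u : Fin n → ℝ) (hlu : ∀ i, l i < u i)
    (Ω : Set (EuclideanSpace ℝ (Fin n)))
    (hΩ : Ω = {y | ∀ i, l i ≤ y i ∧ y i ≤ u i})
    (f : EuclideanSpace ℝ (Fin n) → ℝ)
    (x : EuclideanSpace ℝ (Fin n)) (hx : x ∈ Ω)
    (hdiff : DifferentiableAt ℝ f x)
    (ε : ℝ) (hε : 0 ≤ ε)
    (Ip Im : Set (Fin n))
    (hIp : Ip = {i | u i - x i ≤ ε}) (hIm : Im = {i | x i - l i ≤ ε})
    (hdisj : Disjoint Ip Im)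
    (K Kpolar : Set (EuclideanSpace ℝ (Fin n)))
    (hK : K = {w | (∀ i ∈ Ip, 0 ≤ w i) ∧ (∀ i ∈ Im, w i ≤ 0)
        ∧ (∀ i, i ∉ Ip → i ∉ Im → w i = 0)})
    (hKpolar : Kpolar = {w | (∀ i ∈ Ip, w i ≤ 0) ∧ (∀ i ∈ Im, 0 ≤ w i)})
    (pK pKpolar : EuclideanSpace ℝ (Fin n))
    (hpKmem : pK ∈ K)
    (hpKproj : ∀ q ∈ K, ‖-gradient f x - pK‖ ≤ ‖-gradient f x - q‖)
    (hpKpmem : pKpolar ∈ Kpolar)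
    (hpKpproj : ∀ q ∈ Kpolar, ‖-gradient f x - pKpolar‖ ≤ ‖-gradient f x - q‖)
    (χ : ℝ)
    (hχ : χ = sSup {r : ℝ | ∃ ω : EuclideanSpace ℝ (Fin n),
        x + ω ∈ Ω ∧ ‖ω‖ ≤ 1 ∧ r = -(inner ℝ (gradient f x) ω : ℝ)}) :
    χ ≤ ‖pKpolar‖ + Real.sqrt n * ‖pK‖ * ε :=
  stmt_6_general n l u Ω hΩ f x ε hε Ip Im hIp hIm hdisj K Kpolar hK hKpolar pK pKpolar hpKmem
    hpKproj hpKpmem hpKpproj χ hχ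
end

section
/- Let f : ℝⁿ → ℝ be differentiable with L-Lipschitz gradient (‖∇f(y) − ∇f(z)‖ ≤ L‖y − z‖ for all y, z). Let x, d ∈ ℝⁿ with ‖d‖ = 1 and Δ > 0. If the sufficient-decrease condition fails in the sense that f(x) ≤ f(x + Δd) + Δ², then −⟪∇f(x), d⟫ ≤ (L + 1)·Δ. -/
open InnerProductSpace

/- Taylor's bound for a function with Lipschitz gradient, `|f(x + Δd) - f(x) - Δ⟪∇f(x), d⟫| ≤ LΔ²`,
combined with the failed decrease `f(x) - f(x + Δd) ≤ Δ²`, gives `-Δ⟪∇f(x), d⟫ ≤ (L + 1)Δ²`. -/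

theorem norm_sub_sub_fderiv_le_of_lipschitz_fderiv {E F : Type*}
    [NormedAddCommGroup E] [NormedSpace ℝ E] [NormedAddCommGroup F] [NormedSpace ℝ F]
    {f : E → F} (hf : Differentiable ℝ f) {L : ℝ}
    (hL : ∀ y z, ‖fderiv ℝ f y - fderiv ℝ f z‖ ≤ L * ‖y - z‖) (x v : E) :
    ‖f (x + v) - f x - fderiv ℝ f x v‖ ≤ L * ‖v‖ ^ 2 := by
  have hLv : 0 ≤ L * ‖v‖ := by
    simpa using (norm_nonneg _).trans (hL (x + v) x)
  have hseg : ∀ z ∈ segment ℝ x (x + v), ‖fderiv ℝ f z - fderiv ℝ f x‖ ≤ L * ‖v‖ := by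
    rintro _ ⟨a, b, ha, hb, hab, rfl⟩
    have hzx : a • x + b • (x + v) - x = b • v := by
      rw [eq_sub_of_add_eq hab]; module
    calc ‖fderiv ℝ f (a • x + b • (x + v)) - fderiv ℝ f x‖
        ≤ L * ‖a • x + b • (x + v) - x‖ := hL _ _
      _ = b * (L * ‖v‖) := by rw [hzx, norm_smul, Real.norm_of_nonneg hb]; ring
      _ ≤ L * ‖v‖ := mul_le_of_le_one_left hLv (by linarith)
  have := (convex_segment x (x + v)).norm_image_sub_le_of_norm_fderiv_le'
    (fun z _ => hf z) hseg (left_mem_segment ℝ x _) (right_mem_segment ℝ x _)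
  simpa [sq, mul_assoc] using this

theorem norm_fderiv_sub_fderiv_eq_norm_gradient_sub_gradient {F : Type*}
    [NormedAddCommGroup F] [InnerProductSpace ℝ F] [CompleteSpace F] (f : F → ℝ) (y z : F) :
    ‖fderiv ℝ f y - fderiv ℝ f z‖ = ‖gradient f y - gradient f z‖ := by
  rw [← toDual_gradient, ← toDual_gradient, ← map_sub, LinearIsometryEquiv.norm_map]

theorem stmt_9_general (n : ℕ)
    (f : EuclideanSpace ℝ (Fin n) → ℝ)
    (hdiff : Differentiable ℝ f)
    (L : ℝ)
    (hLip : ∀ y z : EuclideanSpace ℝ (Fin n),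
      ‖gradient f y - gradient f z‖ ≤ L * ‖y - z‖)
    (x d : EuclideanSpace ℝ (Fin n)) (hd : ‖d‖ = 1)
    (Δ : ℝ) (hΔ : 0 < Δ)
    (hfail : f x ≤ f (x + Δ • d) + Δ ^ 2) :
    -(inner ℝ (gradient f x) d : ℝ) ≤ (L + 1) * Δ := by
  have htaylor := norm_sub_sub_fderiv_le_of_lipschitz_fderiv hdiff
    (fun y z => (norm_fderiv_sub_fderiv_eq_norm_gradient_sub_gradient f y z).trans_le (hLip y z))
    x (Δ • d)
  rw [← toDual_gradient, toDual_apply_apply, inner_smul_right, norm_smul, hd,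
    Real.norm_of_nonneg hΔ.le, Real.norm_eq_abs, mul_one] at htaylor
  have hupper := (abs_le.mp htaylor).2
  have hscaled : Δ * -(inner ℝ (gradient f x) d : ℝ) ≤ Δ * ((L + 1) * Δ) := by nlinarith
  exact le_of_mul_le_mul_left hscaled hΔ

/-- If the sufficient-decrease condition fails along a unit direction d, i.e.
  f(x) ≤ f(x + Δd) + Δ², then −⟪∇f(x), d⟫ ≤ (L + 1)·Δ. -/
theorem stmt_9 (n : ℕ) (hn : 1 ≤ n)
    (f : EuclideanSpace ℝ (Fin n) → ℝ)
    (hdiff : Differentiable ℝ f)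
    (L : ℝ)
    (hLip : ∀ y z : EuclideanSpace ℝ (Fin n),
      ‖gradient f y - gradient f z‖ ≤ L * ‖y - z‖)
    (x d : EuclideanSpace ℝ (Fin n)) (hd : ‖d‖ = 1)
    (Δ : ℝ) (hΔ : 0 < Δ)
    (hfail : f x ≤ f (x + Δ • d) + Δ ^ 2) :
    -(inner ℝ (gradient f x) d : ℝ) ≤ (L + 1) * Δ :=
  stmt_9_general n f hdiff L hLip x d hd Δ hΔ hfail
end

section
/- Let f : ℝⁿ → ℝ be differentiable with L-Lipschitz gradient and ‖∇f(y)‖ ≤ γ for all y ∈ Ω. Let x ∈ Ω and Δ > 0, set I⁺ = {i : u_i − x_i ≤ Δ} and I⁻ = {i : x_i − l_i ≤ Δ}, assume I⁺ and I⁻ are disjoint, and let G = {−e_i : i ∈ I⁺} ∪ {e_i : i ∈ I⁻} ∪ {e_i, −e_i : i ∉ I⁺ ∪ I⁻}. If for every d ∈ G the inequality f(x) ≤ f(x + Δd) + Δ² holds (i.e., no search direction attains the sufficient decrease f(x + Δd) < f(x) − Δ²), then χ(x) ≤ √n · (L + γ + 1) · Δ. (The paper states the bound √n(L+γ)Δ,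 inadvertently dropping the additive term √nΔ coming from the backtracking test; the provable constant is √n(L+γ+1).) -/
/-!
A failed poll along `±eᵢ` means that the first-order model cannot decrease by much along that
direction: by the descent lemma, `f x ≤ f (x + Δ d) + Δ²` forces `-⟪∇f x, d⟫ ≤ (1 + L) Δ`.
For a feasible `ω`, each coordinate `-gᵢ ωᵢ` is then bounded either by `(1 + L) Δ |ωᵢ|`, when
the poll set contains the direction of `ωᵢ`, or by `Δ |gᵢ|`, when that direction is missing
because the bound `uᵢ` or `lᵢ` is within `Δ` of `xᵢ`. Summing and comparing `ℓ¹` with `ℓ²`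
norms gives `-⟪g, ω⟫ ≤ √n ((1 + L) Δ ‖ω‖ + Δ ‖g‖)`.
-/

open scoped RealInnerProductSpace

theorem nonneg_of_norm_sub_le_mul_norm {E F : Type*} [NormedAddCommGroup E]
    [NormedAddCommGroup F] {φ : E → F} {L : ℝ} (h : ∀ y z, ‖φ y - φ z‖ ≤ L * ‖y - z‖)
    {y z : E} (hyz : y ≠ z) : 0 ≤ L :=
  nonneg_of_mul_nonneg_left ((norm_nonneg _).trans (h y z))
    (norm_pos_iff.mpr (sub_ne_zero.mpr hyz))

section Descent

variable {E : Type*} [NormedAddCommGroup E] [InnerProductSpace ℝ E] [CompleteSpace E]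
  {f : E → ℝ} {L : ℝ}

theorem abs_sub_sub_inner_gradient_le (hf : Differentiable ℝ f)
    (hL : ∀ y z, ‖gradient f y - gradient f z‖ ≤ L * ‖y - z‖) (x y : E) :
    |f y - f x - ⟪gradient f x, y - x⟫| ≤ L * ‖y - x‖ ^ 2 := by
  rcases eq_or_ne y x with rfl | hne
  · simp
  have hL0 : 0 ≤ L := nonneg_of_norm_sub_le_mul_norm hL hne
  have hbound : ∀ z ∈ Metric.closedBall x ‖y - x‖,
      ‖fderiv ℝ f z - InnerProductSpace.toDual ℝ E (gradient f x)‖ ≤ L * ‖y - x‖ := by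
    intro z hz
    rw [← toDual_gradient, ← map_sub, LinearIsometryEquiv.norm_map]
    rw [Metric.mem_closedBall, dist_eq_norm] at hz
    exact (hL z x).trans (by gcongr)
  have := (convex_closedBall x ‖y - x‖).norm_image_sub_le_of_norm_fderiv_le'
    (fun z _ => hf z) hbound (Metric.mem_closedBall_self (norm_nonneg _))
    (by rw [Metric.mem_closedBall, dist_eq_norm])
  rwa [InnerProductSpace.toDual_apply_apply, Real.norm_eq_abs, mul_assoc, ← sq] at this

theorem neg_inner_gradient_le_of_le_add_sq (hf : Differentiable ℝ f)
    (hL : ∀ y z, ‖gradient f y - gradient f z‖ ≤ L * ‖y - z‖) {x d : E} (hd : ‖d‖ = 1)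
    {Δ : ℝ} (hΔ : 0 < Δ) (hfail : f x ≤ f (x + Δ • d) + Δ ^ 2) :
    -⟪gradient f x, d⟫ ≤ (1 + L) * Δ := by
  have h := (abs_le.mp (abs_sub_sub_inner_gradient_le hf hL x (x + Δ • d))).2
  rw [add_sub_cancel_left, norm_smul, hd, Real.norm_of_nonneg hΔ.le, inner_smul_right] at h
  have : Δ * -⟪gradient f x, d⟫ ≤ Δ * ((1 + L) * Δ) := by nlinarith
  exact le_of_mul_le_mul_left this hΔ

end Descent

theorem neg_mul_le_mul_abs_add_mul_abs {g w c Δ : ℝ} (hc : 0 ≤ c) (hΔ : 0 ≤ Δ)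
    (hpos : -g ≤ c ∨ w ≤ Δ) (hneg : g ≤ c ∨ -w ≤ Δ) :
    -(g * w) ≤ c * |w| + Δ * |g| := by
  rcases le_total 0 w with hw | hw
  · rw [abs_of_nonneg hw]
    rcases hpos with h | h
    · nlinarith [abs_nonneg g]
    · nlinarith [mul_le_mul_of_nonneg_right (neg_le_abs g) hw,
        mul_le_mul_of_nonneg_left h (abs_nonneg g), mul_nonneg hc hw]
  · rw [abs_of_nonpos hw]
    rcases hneg with h | h
    · nlinarith [abs_nonneg g]
    · nlinarith [mul_le_mul_of_nonneg_right (le_abs_self g) (neg_nonneg.mpr hw),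
        mul_le_mul_of_nonneg_left h (abs_nonneg g), mul_nonneg hc (neg_nonneg.mpr hw)]

namespace EuclideanSpace

variable {ι : Type*} [Fintype ι]

theorem sum_abs_le_sqrt_card_mul_norm_s11 (v : EuclideanSpace ℝ ι) :
    ∑ i, |v i| ≤ √(Fintype.card ι) * ‖v‖ := by
  rw [EuclideanSpace.norm_eq, ← Real.sqrt_mul (Nat.cast_nonneg _)]
  apply Real.le_sqrt_of_sq_le
  simpa [Real.norm_eq_abs, sq_abs] using
    sq_sum_le_card_mul_sum_sq (s := Finset.univ) (f := fun i => |v i|)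

theorem neg_inner_le_sqrt_card_mul {g w : EuclideanSpace ℝ ι} {c Δ : ℝ} (hc : 0 ≤ c) (hΔ : 0 ≤ Δ)
    (hpos : ∀ i, -g i ≤ c ∨ w i ≤ Δ) (hneg : ∀ i, g i ≤ c ∨ -w i ≤ Δ) :
    -⟪g, w⟫ ≤ √(Fintype.card ι) * (c * ‖w‖ + Δ * ‖g‖) := by
  have hinner : ⟪g, w⟫ = ∑ i, g i * w i := by
    simp [PiLp.inner_apply, mul_comm]
  calc -⟪g, w⟫ = ∑ i, -(g i * w i) := by rw [hinner, Finset.sum_neg_distrib]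
    _ ≤ ∑ i, (c * |w i| + Δ * |g i|) :=
        Finset.sum_le_sum fun i _ => neg_mul_le_mul_abs_add_mul_abs hc hΔ (hpos i) (hneg i)
    _ = c * ∑ i, |w i| + Δ * ∑ i, |g i| := by
        rw [Finset.sum_add_distrib, Finset.mul_sum, Finset.mul_sum]
    _ ≤ c * (√(Fintype.card ι) * ‖w‖) + Δ * (√(Fintype.card ι) * ‖g‖) := by
        gcongr <;> exact sum_abs_le_sqrt_card_mul_norm_s11 _
    _ = _ := by ring

end EuclideanSpace

section PollSet

variable {ι : Type*} [DecidableEq ι] {Ip Im : Set ι} {i : ι}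

/-- The poll set `G`: `Ip` and `Im` are the coordinates whose upper, respectively lower, bound is
close, and only directions away from a close bound are polled. -/
def coordinatePollSet (Ip Im : Set ι) : Set (EuclideanSpace ℝ ι) :=
  {d | (∃ i ∈ Ip, d = -EuclideanSpace.single i 1) ∨ (∃ i ∈ Im, d = EuclideanSpace.single i 1) ∨
    (∃ i, i ∉ Ip ∧ i ∉ Im ∧ (d = EuclideanSpace.single i 1 ∨ d = -EuclideanSpace.single i 1))}

theorem single_mem_coordinatePollSet (hi : i ∉ Ip) :
    EuclideanSpace.single i 1 ∈ coordinatePollSet Ip Im := by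
  by_cases hm : i ∈ Im
  · exact .inr (.inl ⟨i, hm, rfl⟩)
  · exact .inr (.inr ⟨i, hi, hm, .inl rfl⟩)

theorem neg_single_mem_coordinatePollSet (hi : i ∉ Im) :
    -EuclideanSpace.single i 1 ∈ coordinatePollSet Ip Im := by
  by_cases hp : i ∈ Ip
  · exact .inl ⟨i, hp, rfl⟩
  · exact .inr (.inr ⟨i, hp, hi, .inr rfl⟩)

end PollSet

theorem stmt_11_general (n : ℕ) (hn : 1 ≤ n)
    (l u : Fin n → ℝ)
    (Ω : Set (EuclideanSpace ℝ (Fin n)))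
    (hΩ : Ω = {y | ∀ i, l i ≤ y i ∧ y i ≤ u i})
    (f : EuclideanSpace ℝ (Fin n) → ℝ)
    (hdiff : Differentiable ℝ f)
    (L : ℝ)
    (hLip : ∀ y z : EuclideanSpace ℝ (Fin n),
      ‖gradient f y - gradient f z‖ ≤ L * ‖y - z‖)
    (γ : ℝ) (hγ : ∀ y ∈ Ω, ‖gradient f y‖ ≤ γ)
    (x : EuclideanSpace ℝ (Fin n)) (hx : x ∈ Ω)
    (Δ : ℝ) (hΔ : 0 < Δ)
    (Ip Im : Set (Fin n))
    (hIp : Ip = {i | u i - x i ≤ Δ}) (hIm : Im = {i | x i - l i ≤ Δ})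
    (G : Set (EuclideanSpace ℝ (Fin n)))
    (hG : G = {d | (∃ i ∈ Ip, d = -(EuclideanSpace.single i (1 : ℝ)))
        ∨ (∃ i ∈ Im, d = EuclideanSpace.single i (1 : ℝ))
        ∨ (∃ i, i ∉ Ip ∧ i ∉ Im ∧
            (d = EuclideanSpace.single i (1 : ℝ) ∨ d = -(EuclideanSpace.single i (1 : ℝ))))})
    (hfail : ∀ d ∈ G, f x ≤ f (x + Δ • d) + Δ ^ 2)
    (χ : ℝ)
    (hχ : χ = sSup {r : ℝ | ∃ ω : EuclideanSpace ℝ (Fin n),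
        x + ω ∈ Ω ∧ ‖ω‖ ≤ 1 ∧ r = -(inner ℝ (gradient f x) ω : ℝ)}) :
    χ ≤ Real.sqrt n * (L + γ + 1) * Δ := by
  subst hG hχ hΩ hIp hIm
  set g := gradient f x
  have hL : 0 ≤ L := nonneg_of_norm_sub_le_mul_norm hLip
    (by simp : EuclideanSpace.single (⟨0, hn⟩ : Fin n) (1 : ℝ) ≠ 0)
  have hγ0 : 0 ≤ γ := (norm_nonneg g).trans (hγ x hx)
  have hdescent : ∀ d, ‖d‖ = 1 → f x ≤ f (x + Δ • d) + Δ ^ 2 → -⟪g, d⟫ ≤ (1 + L) * Δ :=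
    fun d hd => neg_inner_gradient_le_of_le_add_sq hdiff hLip hd hΔ
  refine Real.sSup_le ?_ (by positivity)
  rintro _ ⟨ω, hωΩ, hω1, rfl⟩
  calc -⟪g, ω⟫ ≤ √(Fintype.card (Fin n)) * ((1 + L) * Δ * ‖ω‖ + Δ * ‖g‖) := by
        refine EuclideanSpace.neg_inner_le_sqrt_card_mul (by positivity) hΔ.le
          (fun i => ?_) (fun i => ?_)
        · by_cases hi : u i - x i ≤ Δ
          · exact .inr (by linarith [(hωΩ i).2, PiLp.add_apply _ x ω i])
          · refine .inl ?_
            simpa [EuclideanSpace.inner_single_right] using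
              hdescent _ (by simp) (hfail _ (single_mem_coordinatePollSet hi))
        · by_cases hi : x i - l i ≤ Δ
          · exact .inr (by linarith [(hωΩ i).1, PiLp.add_apply _ x ω i])
          · refine .inl ?_
            simpa [EuclideanSpace.inner_single_right] using
              hdescent _ (by simp) (hfail _ (neg_single_mem_coordinatePollSet hi))
    _ ≤ √n * ((1 + L) * Δ * 1 + Δ * γ) := by
        rw [Fintype.card_fin]; gcongr; exact hγ x hx
    _ = √n * (L + γ + 1) * Δ := by ring

/-- Main global-convergence bound: if no search direction in G attains the sufficient
  decrease f(x + Δd) < f(x) − Δ², then χ(x) ≤ √n · (L + γ + 1) · Δ. -/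
theorem stmt_11 (n : ℕ) (hn : 1 ≤ n)
    (l u : Fin n → ℝ) (hlu : ∀ i, l i < u i)
    (Ω : Set (EuclideanSpace ℝ (Fin n)))
    (hΩ : Ω = {y | ∀ i, l i ≤ y i ∧ y i ≤ u i})
    (f : EuclideanSpace ℝ (Fin n) → ℝ)
    (hdiff : Differentiable ℝ f)
    (L : ℝ)
    (hLip : ∀ y z : EuclideanSpace ℝ (Fin n),
      ‖gradient f y - gradient f z‖ ≤ L * ‖y - z‖)
    (γ : ℝ) (hγ : ∀ y ∈ Ω, ‖gradient f y‖ ≤ γ)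
    (x : EuclideanSpace ℝ (Fin n)) (hx : x ∈ Ω)
    (Δ : ℝ) (hΔ : 0 < Δ)
    (Ip Im : Set (Fin n))
    (hIp : Ip = {i | u i - x i ≤ Δ}) (hIm : Im = {i | x i - l i ≤ Δ})
    (hdisj : Disjoint Ip Im)
    (G : Set (EuclideanSpace ℝ (Fin n)))
    (hG : G = {d | (∃ i ∈ Ip, d = -(EuclideanSpace.single i (1 : ℝ)))
        ∨ (∃ i ∈ Im, d = EuclideanSpace.single i (1 : ℝ))
        ∨ (∃ i, i ∉ Ip ∧ i ∉ Im ∧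
            (d = EuclideanSpace.single i (1 : ℝ) ∨ d = -(EuclideanSpace.single i (1 : ℝ))))})
    (hfail : ∀ d ∈ G, f x ≤ f (x + Δ • d) + Δ ^ 2)
    (χ : ℝ)
    (hχ : χ = sSup {r : ℝ | ∃ ω : EuclideanSpace ℝ (Fin n),
        x + ω ∈ Ω ∧ ‖ω‖ ≤ 1 ∧ r = -(inner ℝ (gradient f x) ω : ℝ)}) :
    χ ≤ Real.sqrt n * (L + γ + 1) * Δ :=
  stmt_11_general n hn l u Ω hΩ f hdiff L hLip γ hγ x hx Δ hΔ Ip Im hIp hIm G hG hfail χ hχ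
end

section
/- Let f : ℝⁿ → ℝ be differentiable at x ∈ Ω. Then χ(x) ≥ 0, and χ(x) = 0 if and only if x is a KKT point of the box-constrained problem min_{y ∈ Ω} f(y), i.e., for every index i: (∇f(x))_i = 0 whenever l_i < x_i < u_i, (∇f(x))_i ≥ 0 whenever x_i = l_i, and (∇f(x))_i ≤ 0 whenever x_i = u_i. -/
/-!
Since `x ∈ Ω`, the direction `ω = 0` shows `χ(x) ≥ 0`, and `χ(x) = 0` says exactly that
`⟪∇f(x), ω⟫ ≥ 0` for every feasible direction of norm at most one. For the box,
`⟪∇f(x), ω⟫ = ∑ i, (∇f(x))_i ω_i`, and the feasible directions include the short steps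
`c • e_i` along each coordinate, towards whichever face of `[l_i, u_i]` is not active; testing
with these gives the sign conditions, and conversely the sign conditions make every summand
nonnegative.
-/

open RealInnerProductSpace

section Scalar

variable {l u x g : ℝ}

theorem mul_nonneg_of_box_kkt {w : ℝ} (hx : l ≤ x ∧ x ≤ u) (hw : l ≤ x + w ∧ x + w ≤ u)
    (hint : l < x → x < u → g = 0) (hlow : x = l → 0 ≤ g) (hupp : x = u → g ≤ 0) :
    0 ≤ g * w := by
  rcases hx.1.eq_or_lt with hl | hl
  · exact mul_nonneg (hlow hl.symm) (by linarith)
  rcases hx.2.eq_or_lt with hu | hu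
  · exact mul_nonneg_of_nonpos_of_nonpos (hupp hu) (by linarith)
  · simp [hint hl hu]

theorem box_kkt_of_forall_mul_nonneg (hlu : l < u) (hx : l ≤ x ∧ x ≤ u)
    (h : ∀ c, l ≤ x + c → x + c ≤ u → |c| ≤ 1 → 0 ≤ g * c) :
    (l < x → x < u → g = 0) ∧ (x = l → 0 ≤ g) ∧ (x = u → g ≤ 0) := by
  have nonpos : l < x → g ≤ 0 := fun hl => by
    have hc : max (l - x) (-1) < 0 := max_lt (by linarith) (by norm_num)
    have := h (max (l - x) (-1)) (by linarith [le_max_left (l - x) (-1)]) (by linarith)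
      (abs_le.2 ⟨le_max_right _ _, by linarith⟩)
    nlinarith
  have nonneg : x < u → 0 ≤ g := fun hu => by
    have hc : 0 < min (u - x) 1 := lt_min (by linarith) one_pos
    have := h (min (u - x) 1) (by linarith) (by linarith [min_le_left (u - x) 1])
      (abs_le.2 ⟨by linarith, min_le_right _ _⟩)
    nlinarith
  exact ⟨fun hl hu => le_antisymm (nonpos hl) (nonneg hu),
    fun hl => nonneg (hl ▸ hlu), fun hu => nonpos (hu ▸ hlu)⟩

end Scalar

section StationaritySet

variable {E : Type*} [NormedAddCommGroup E] [InnerProductSpace ℝ E] {Ω : Set E} {x : E}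

/-- The set whose supremum is the stationarity measure `χ(x)` for the gradient `g`. -/
def stationaritySet (Ω : Set E) (x g : E) : Set ℝ :=
  {r | ∃ ω, x + ω ∈ Ω ∧ ‖ω‖ ≤ 1 ∧ r = -⟪g, ω⟫}

theorem zero_mem_stationaritySet (hx : x ∈ Ω) (g : E) : 0 ∈ stationaritySet Ω x g :=
  ⟨0, by simpa using hx, by simp, by simp⟩

theorem bddAbove_stationaritySet (Ω : Set E) (x g : E) : BddAbove (stationaritySet Ω x g) := by
  refine ⟨‖g‖, ?_⟩
  rintro r ⟨ω, -, hω, rfl⟩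
  calc -⟪g, ω⟫ ≤ ‖g‖ * ‖ω‖ := by
        simpa [inner_neg_right] using real_inner_le_norm g (-ω)
    _ ≤ ‖g‖ := mul_le_of_le_one_right (norm_nonneg g) hω

theorem sSup_stationaritySet_nonneg (hx : x ∈ Ω) (g : E) : 0 ≤ sSup (stationaritySet Ω x g) :=
  le_csSup (bddAbove_stationaritySet Ω x g) (zero_mem_stationaritySet hx g)

theorem sSup_stationaritySet_eq_zero_iff (hx : x ∈ Ω) (g : E) :
    sSup (stationaritySet Ω x g) = 0 ↔ ∀ ω, x + ω ∈ Ω → ‖ω‖ ≤ 1 → 0 ≤ ⟪g, ω⟫ := by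
  constructor
  · intro h ω hω hω1
    have := le_csSup (bddAbove_stationaritySet Ω x g) ⟨ω, hω, hω1, rfl⟩
    linarith
  · intro h
    refine IsGreatest.csSup_eq ⟨zero_mem_stationaritySet hx g, ?_⟩
    rintro r ⟨ω, hω, hω1, rfl⟩
    linarith [h ω hω hω1]

end StationaritySet

section Box

variable {ι : Type*} [Fintype ι] [DecidableEq ι] {l u : ι → ℝ} {x g : EuclideanSpace ℝ ι}

theorem forall_inner_nonneg_iff_box_kkt (hlu : ∀ i, l i < u i)
    (hx : ∀ i, l i ≤ x i ∧ x i ≤ u i) :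
    (∀ ω, x + ω ∈ {y : EuclideanSpace ℝ ι | ∀ i, l i ≤ y i ∧ y i ≤ u i} → ‖ω‖ ≤ 1 →
        0 ≤ ⟪g, ω⟫) ↔
      ∀ i, (l i < x i → x i < u i → g i = 0) ∧ (x i = l i → 0 ≤ g i) ∧
        (x i = u i → g i ≤ 0) := by
  constructor
  · intro h i
    refine box_kkt_of_forall_mul_nonneg (hlu i) (hx i) fun c hcl hcu hc => ?_
    have hstep : x + EuclideanSpace.single i c ∈
        {y : EuclideanSpace ℝ ι | ∀ i, l i ≤ y i ∧ y i ≤ u i} := by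
      intro j
      by_cases hji : j = i
      · subst hji; simpa using ⟨hcl, hcu⟩
      · simpa [hji] using hx j
    simpa [EuclideanSpace.inner_single_right, mul_comm] using
      h _ hstep (by simpa using hc)
  · intro hkkt ω hω _
    rw [PiLp.inner_apply]
    refine Finset.sum_nonneg fun i _ => ?_
    obtain ⟨hint, hlow, hupp⟩ := hkkt i
    simpa [mul_comm (ω i)] using
      mul_nonneg_of_box_kkt (hx i) (by simpa using hω i) hint hlow hupp

end Box

theorem stmt_12_general (n : ℕ)
    (l u : Fin n → ℝ) (hlu : ∀ i, l i < u i)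
    (Ω : Set (EuclideanSpace ℝ (Fin n)))
    (hΩ : Ω = {y | ∀ i, l i ≤ y i ∧ y i ≤ u i})
    (f : EuclideanSpace ℝ (Fin n) → ℝ)
    (x : EuclideanSpace ℝ (Fin n)) (hx : x ∈ Ω)
    (χ : ℝ)
    (hχ : χ = sSup {r : ℝ | ∃ ω : EuclideanSpace ℝ (Fin n),
        x + ω ∈ Ω ∧ ‖ω‖ ≤ 1 ∧ r = -(inner ℝ (gradient f x) ω : ℝ)}) :
    0 ≤ χ ∧
      (χ = 0 ↔ ∀ i : Fin n,
        (l i < x i → x i < u i → gradient f x i = 0)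
        ∧ (x i = l i → 0 ≤ gradient f x i)
        ∧ (x i = u i → gradient f x i ≤ 0)) := by
  subst hχ
  refine ⟨sSup_stationaritySet_nonneg hx _, (sSup_stationaritySet_eq_zero_iff hx _).trans ?_⟩
  subst hΩ
  exact forall_inner_nonneg_iff_box_kkt hlu hx

/-- The stationarity measure χ is nonnegative, and vanishes exactly at KKT points
  of the box-constrained problem. -/
theorem stmt_12 (n : ℕ) (hn : 1 ≤ n)
    (l u : Fin n → ℝ) (hlu : ∀ i, l i < u i)
    (Ω : Set (EuclideanSpace ℝ (Fin n)))
    (hΩ : Ω = {y | ∀ i, l i ≤ y i ∧ y i ≤ u i})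
    (f : EuclideanSpace ℝ (Fin n) → ℝ)
    (x : EuclideanSpace ℝ (Fin n)) (hx : x ∈ Ω)
    (hdiff : DifferentiableAt ℝ f x)
    (χ : ℝ)
    (hχ : χ = sSup {r : ℝ | ∃ ω : EuclideanSpace ℝ (Fin n),
        x + ω ∈ Ω ∧ ‖ω‖ ≤ 1 ∧ r = -(inner ℝ (gradient f x) ω : ℝ)}) :
    0 ≤ χ ∧
      (χ = 0 ↔ ∀ i : Fin n,
        (l i < x i → x i < u i → gradient f x i = 0)
        ∧ (x i = l i → 0 ≤ gradient f x i)
        ∧ (x i = u i → gradient f x i ≤ 0)) :=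
  stmt_12_general n l u hlu Ω hΩ f x hx χ hχ
end
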